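/- arXiv:1009.3764 — 6 statements merged into one kernel-verified Lean document; each statement's English description precedes it below -/
import Mathlib

section
/- Let f_1,...,f_r be polynomials over F_q in n variables with total degrees d_1,...,d_r and d = d_1 + ... + d_r. If n > d and the f_i are all homogeneous, then the system f_1 = ... = f_r = 0 has a nonzero common solution in F_q^n. -/
/-!
By Chevalley–Warning, the number of common zeros of the `f i` is divisible by the characteristic
`p` of `F`, since `∑ deg f i < n`. Homogeneous polynomials of positive degree vanish at `0`, so
there are at least `p ≥ 2` common zeros, and one of them is nonzero.
-/

open MvPolynomial

namespace MvPolynomial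

theorem IsHomogeneous.eval_zero {R σ : Type*} [CommSemiring R] {φ : MvPolynomial σ R} {m : ℕ}
    (hφ : φ.IsHomogeneous m) (hm : m ≠ 0) : eval 0 φ = 0 := by
  rw [MvPolynomial.eval_zero]
  exact hφ.coeff_eq_zero (by simpa using hm.symm)

end MvPolynomial

namespace FiniteField

theorem exists_ne_common_zero_of_sum_totalDegree_lt {K σ ι : Type*} [Field K] [Fintype K]
    [Fintype σ] [Fintype ι] {f : ι → MvPolynomial σ K}
    (h : ∑ i, (f i).totalDegree < Fintype.card σ) (x : σ → K) (hx : ∀ i, eval x (f i) = 0) :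
    ∃ y ≠ x, ∀ i, eval y (f i) = 0 := by
  classical
  obtain ⟨p, _⟩ := CharP.exists K
  have : Fact p.Prime := ⟨CharP.char_is_prime K p⟩
  have hp_dvd := char_dvd_card_solutions_of_fintype_sum_lt p h
  have hcard_pos : 0 < Fintype.card { y : σ → K // ∀ i, eval y (f i) = 0 } :=
    Fintype.card_pos_iff.mpr ⟨⟨x, hx⟩⟩
  obtain ⟨⟨y, hy⟩, hne⟩ := Fintype.exists_ne_of_one_lt_card
    ((Fact.out : p.Prime).one_lt.trans_le (Nat.le_of_dvd hcard_pos hp_dvd)) ⟨x, hx⟩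
  exact ⟨y, fun hyx => hne (Subtype.ext hyx), hy⟩

end FiniteField

theorem chevalley_nontrivial_zero
    (F : Type*) [Field F] [Fintype F]
    (n r : ℕ) (f : Fin r → MvPolynomial (Fin n) F) (d : Fin r → ℕ)
    (hdeg : ∀ i, (f i).IsHomogeneous (d i))
    (hd1 : ∀ i, 1 ≤ d i)
    (hn : ∑ i, d i < n) :
    ∃ x : Fin n → F, x ≠ 0 ∧ ∀ i, MvPolynomial.eval x (f i) = 0 := by
  have hdeg_lt : ∑ i, (f i).totalDegree < Fintype.card (Fin n) :=
    calc ∑ i, (f i).totalDegree ≤ ∑ i, d i :=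
          Finset.sum_le_sum fun i _ => (hdeg i).totalDegree_le
      _ < Fintype.card (Fin n) := by rwa [Fintype.card_fin]
  exact FiniteField.exists_ne_common_zero_of_sum_totalDegree_lt hdeg_lt 0
    fun i => (hdeg i).eval_zero (Nat.one_le_iff_ne_zero.mp (hd1 i))
end

section
/- Let Z ⊆ F_q^n be any set, let L_0 ⊆ F_q^n be an affine subspace, let L ⊇ L_0 be an affine subspace of maximal dimension k with #(Z ∩ L) = #(Z ∩ L_0), and let L' ⊃ L be a (k+1)-dimensional affine subspace minimizing #(Z ∩ L'). Then #Z ≥ #(Z ∩ L) + ((q^{n-k} − 1)/(q − 1))·(#(Z ∩ L') − #(Z ∩ L)). -/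
/-!
Every point `x ∉ L` lies in exactly one affine subspace of dimension `dim L + 1` containing `L`,
namely the span of `L` and `x`. So the complement of `L` is partitioned into the sets `M \ L` over
these subspaces `M`, each of size `q ^ (k + 1) - q ^ k`, and counting the whole space shows that
there are `(q ^ (n - k) - 1) / (q - 1)` of them. By minimality of `L'`, each `M \ L` contains at
least `#(Z ∩ L') - #(Z ∩ L)` points of `Z`; summing over the partition gives the bound.
-/

open Module Set

theorem Set.ncard_eq_sum_ncard_inter_preimage {α β : Type*} {s : Set α} {t : Finset β}
    {f : α → β} (hs : s.Finite) (hf : MapsTo f s t) :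
    s.ncard = ∑ b ∈ t, (s ∩ f ⁻¹' {b}).ncard := by
  classical
  rw [ncard_eq_toFinset_card s hs, Finset.card_eq_sum_card_fiberwise (by simpa using hf)]
  refine Finset.sum_congr rfl fun b _ => ?_
  rw [← ncard_coe_finset]
  congr 1
  ext
  simp

theorem Nat.eq_div_of_mul_pow_succ_sub_pow {q k d s : ℕ} (hq : 1 < q) (hkd : k ≤ d)
    (h : s * (q ^ (k + 1) - q ^ k) = q ^ d - q ^ k) : s = (q ^ (d - k) - 1) / (q - 1) := by
  have hstep : q ^ (k + 1) - q ^ k = q ^ k * (q - 1) := by rw [Nat.mul_sub, pow_succ, mul_one]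
  have htotal : q ^ d - q ^ k = q ^ k * (q ^ (d - k) - 1) := by
    rw [Nat.mul_sub, mul_one, ← pow_add, Nat.add_sub_cancel' hkd]
  rw [hstep, htotal, mul_left_comm] at h
  exact (Nat.div_eq_of_eq_mul_left (by omega)
    (Nat.eq_of_mul_eq_mul_left (by positivity) h).symm).symm

namespace AffineSubspace

variable {K V P : Type*} [DivisionRing K] [AddCommGroup V] [Module K V] [AddTorsor V P]

theorem le_affineSpan_insert (L : AffineSubspace K P) (x : P) :
    L ≤ affineSpan K (insert x (L : Set P)) :=
  (affineSpan_coe L).symm.trans_le (affineSpan_mono K (subset_insert _ _))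

theorem finrank_direction_affineSpan_insert [FiniteDimensional K V] {L : AffineSubspace K P}
    {p x : P} (hp : p ∈ L) (hx : x ∉ L) :
    finrank K (affineSpan K (insert x (L : Set P))).direction = finrank K L.direction + 1 := by
  rw [direction_affineSpan_insert hp, sup_comm, Submodule.finrank_sup_span_singleton]
  exact fun h => hx (by simpa using vadd_mem_of_mem_direction h hp)

theorem eq_affineSpan_insert_of_finrank_eq [FiniteDimensional K V] {L M : AffineSubspace K P}
    {p x : P} (hp : p ∈ L) (hLM : L ≤ M)
    (hM : finrank K M.direction = finrank K L.direction + 1) (hxM : x ∈ M) (hxL : x ∉ L) :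
    M = affineSpan K (insert x (L : Set P)) := by
  have hle : affineSpan K (insert x (L : Set P)) ≤ M := affineSpan_le.2 (insert_subset hxM hLM)
  refine (eq_of_direction_eq_of_nonempty_of_le ?_
    ⟨x, mem_affineSpan K (mem_insert _ _)⟩ hle).symm
  exact Submodule.eq_of_le_of_finrank_eq (direction_le hle)
    (by rw [finrank_direction_affineSpan_insert hp hxL, hM])

theorem ncard_eq_pow_finrank [FiniteDimensional K V] {M : AffineSubspace K P}
    (hM : (M : Set P).Nonempty) :
    (M : Set P).ncard = Nat.card K ^ finrank K M.direction := by
  obtain ⟨p, hp⟩ := hM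
  have : Nonempty M := ⟨⟨p, hp⟩⟩
  rw [← Nat.card_coe_set_eq, SetLike.coe_sort_coe,
    ← Nat.card_congr (Equiv.vaddConst (⟨p, hp⟩ : M)),
    natCard_eq_pow_finrank (K := K)]

instance [Finite P] : Finite (AffineSubspace K P) :=
  Finite.of_injective _ SetLike.coe_injective

noncomputable def oneStepExtensions [Finite P] (L : AffineSubspace K P) :
    Finset (AffineSubspace K P) :=
  (toFinite {M | L < M ∧ finrank K M.direction = finrank K L.direction + 1}).toFinset

variable [Finite P] {L : AffineSubspace K P}

@[simp]
theorem mem_oneStepExtensions {M : AffineSubspace K P} :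
    M ∈ L.oneStepExtensions ↔ L < M ∧ finrank K M.direction = finrank K L.direction + 1 := by
  simp [oneStepExtensions]

variable [FiniteDimensional K V]

theorem ncard_sdiff_eq_sum_ncard_inter_sdiff (hL : (L : Set P).Nonempty) (A : Set P) :
    (A \ L).ncard = ∑ M ∈ L.oneStepExtensions, (A ∩ (M \ L)).ncard := by
  obtain ⟨p, hp⟩ := hL
  have hspan_mem {x : P} (hx : x ∉ L) :
      affineSpan K (insert x (L : Set P)) ∈ L.oneStepExtensions :=
    mem_oneStepExtensions.2 ⟨(le_affineSpan_insert L x).lt_of_ne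
      fun h => hx (h ▸ mem_affineSpan K (mem_insert _ _)),
      finrank_direction_affineSpan_insert hp hx⟩
  rw [ncard_eq_sum_ncard_inter_preimage (toFinite _) fun x hx => hspan_mem hx.2]
  refine Finset.sum_congr rfl fun M hM => congrArg ncard (Set.ext fun x => ?_)
  obtain ⟨hLM, hdim⟩ := mem_oneStepExtensions.1 hM
  constructor
  · rintro ⟨⟨hxA, hxL⟩, rfl : _ = M⟩
    exact ⟨hxA, mem_affineSpan K (mem_insert _ _), hxL⟩
  · rintro ⟨hxA, hxM, hxL⟩
    exact ⟨⟨hxA, hxL⟩, (eq_affineSpan_insert_of_finrank_eq hp hLM.le hdim hxM hxL).symm⟩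

theorem ncard_eq_add_sum_ncard_inter_sdiff (hL : (L : Set P).Nonempty) (A : Set P) :
    A.ncard = (A ∩ L).ncard + ∑ M ∈ L.oneStepExtensions, (A ∩ (M \ L)).ncard := by
  rw [← ncard_sdiff_eq_sum_ncard_inter_sdiff hL, ncard_inter_add_ncard_sdiff_eq_ncard]

theorem card_oneStepExtensions [Finite K] (hL : (L : Set P).Nonempty) :
    L.oneStepExtensions.card =
      (Nat.card K ^ (finrank K V - finrank K L.direction) - 1) / (Nat.card K - 1) := by
  obtain ⟨p, hp⟩ := hL
  refine Nat.eq_div_of_mul_pow_succ_sub_pow Finite.one_lt_card (Submodule.finrank_le _) ?_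
  have hcover := ncard_sdiff_eq_sum_ncard_inter_sdiff ⟨p, hp⟩ univ
  have hpiece : ∀ M ∈ L.oneStepExtensions,
      (univ ∩ ((M : Set P) \ L)).ncard =
        Nat.card K ^ (finrank K L.direction + 1) - Nat.card K ^ finrank K L.direction := by
    intro M hM
    obtain ⟨hLM, hdim⟩ := mem_oneStepExtensions.1 hM
    rw [univ_inter, ncard_sdiff hLM.le, ncard_eq_pow_finrank ⟨p, hLM.le hp⟩,
      ncard_eq_pow_finrank ⟨p, hp⟩, hdim]
  rw [Finset.sum_congr rfl hpiece, Finset.sum_const, smul_eq_mul, ncard_sdiff (subset_univ _),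
    ncard_univ, ncard_eq_pow_finrank ⟨p, hp⟩, ← Nat.card_congr (Equiv.vaddConst p),
    natCard_eq_pow_finrank (K := K)] at hcover
  exact hcover.symm

end AffineSubspace

theorem count_lower_bound_from_flags_general
    (F : Type*) [Field F] [Fintype F]
    (n k : ℕ) (Z : Set (Fin n → F))
    (L₀ L L' : AffineSubspace F (Fin n → F))
    (hL₀ : (L₀ : Set (Fin n → F)).Nonempty)
    (hL₀L : L₀ ≤ L)
    (hk : Module.finrank F L.direction = k)
    -- `L'` minimizes the count among `(k+1)`-dimensional subspaces containing `L`: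
    (hmin : ∀ M : AffineSubspace F (Fin n → F), L < M →
      Module.finrank F M.direction = k + 1 → (Z ∩ L').ncard ≤ (Z ∩ M).ncard) :
    Z.ncard ≥ (Z ∩ L).ncard +
      ((Fintype.card F ^ (n - k) - 1) / (Fintype.card F - 1)) *
        ((Z ∩ L').ncard - (Z ∩ L).ncard) := by
  have hL : (L : Set (Fin n → F)).Nonempty := hL₀.mono hL₀L
  have hcard := AffineSubspace.card_oneStepExtensions hL
  rw [Nat.card_eq_fintype_card, finrank_fin_fun, hk] at hcard
  have hpiece : ∀ M ∈ L.oneStepExtensions,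
      (Z ∩ L').ncard - (Z ∩ L).ncard ≤ (Z ∩ (M \ L)).ncard := by
    intro M hM
    obtain ⟨hLM, hdim⟩ := AffineSubspace.mem_oneStepExtensions.1 hM
    have hsplit := ncard_inter_add_ncard_sdiff_eq_ncard (Z ∩ M) L
    rw [inter_assoc, inter_eq_right.2 hLM.le, inter_sdiff_assoc] at hsplit
    have := hmin M hLM (hk ▸ hdim)
    omega
  calc (Z ∩ L).ncard + (Fintype.card F ^ (n - k) - 1) / (Fintype.card F - 1) *
        ((Z ∩ L').ncard - (Z ∩ L).ncard)
      = (Z ∩ L).ncard + ∑ _M ∈ L.oneStepExtensions, ((Z ∩ L').ncard - (Z ∩ L).ncard) := by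
        rw [Finset.sum_const, smul_eq_mul, hcard]
    _ ≤ (Z ∩ L).ncard + ∑ M ∈ L.oneStepExtensions, (Z ∩ (M \ L)).ncard := by
        gcongr with M hM
        exact hpiece M hM
    _ = Z.ncard := (AffineSubspace.ncard_eq_add_sum_ncard_inter_sdiff hL Z).symm

theorem count_lower_bound_from_flags
    (F : Type*) [Field F] [Fintype F]
    (n k : ℕ) (Z : Set (Fin n → F))
    (L₀ L L' : AffineSubspace F (Fin n → F))
    (hL₀ : (L₀ : Set (Fin n → F)).Nonempty)
    (hL₀L : L₀ ≤ L)
    (hk : Module.finrank F L.direction = k)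
    (hsame : (Z ∩ L).ncard = (Z ∩ L₀).ncard)
    -- `L` has maximal dimension among subspaces containing `L₀` with the same count:
    (hmax : ∀ M : AffineSubspace F (Fin n → F), L₀ ≤ M →
      (Z ∩ M).ncard = (Z ∩ L₀).ncard → Module.finrank F M.direction ≤ k)
    (hLL' : L < L')
    (hk' : Module.finrank F L'.direction = k + 1)
    -- `L'` minimizes the count among `(k+1)`-dimensional subspaces containing `L`:
    (hmin : ∀ M : AffineSubspace F (Fin n → F), L < M →
      Module.finrank F M.direction = k + 1 → (Z ∩ L').ncard ≤ (Z ∩ M).ncard) :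
    Z.ncard ≥ (Z ∩ L).ncard +
      ((Fintype.card F ^ (n - k) - 1) / (Fintype.card F - 1)) *
        ((Z ∩ L').ncard - (Z ∩ L).ncard) :=
  count_lower_bound_from_flags_general F n k Z L₀ L L' hL₀ hL₀L hk hmin
end

section
/- Let q = 2 and let S ⊆ F_2^t contain t+1 points in general position (i.e., affinely spanning F_2^t). If no affine 2-plane in F_2^t meets S in exactly 3 points, then S = F_2^t. -/
/-!
Over a field with two elements the plane through three distinct points `x, y, z` consists of
exactly these three points and `y + z - x`. Hence if no plane meets `S` in exactly three points,
`S` is closed under `(x, y, z) ↦ y + z - x`; over `𝔽₂` this makes `S` an affine subspace, so it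
contains the affine span of the `P i`, which is the whole space.
-/

section CardTwo

open Module Submodule

variable {F V : Type*} [Field F] [Fintype F] [AddCommGroup V] [Module F V]

theorem eq_zero_or_eq_one_of_card_eq_two (hq : Fintype.card F = 2) (a : F) : a = 0 ∨ a = 1 :=
  or_iff_not_imp_left.2 fun ha => by
    simpa [hq] using FiniteField.pow_card_sub_one_eq_one a ha

theorem add_self_eq_zero_of_card_eq_two (hq : Fintype.card F = 2) (v : V) : v + v = 0 := by
  have h2 : (2 : F) = 0 := by exact_mod_cast hq ▸ FiniteField.cast_card_eq_zero F
  rw [← two_smul F v, h2, zero_smul]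

theorem coe_span_pair_of_card_eq_two (hq : Fintype.card F = 2) (u v : V) :
    (span F {u, v} : Set V) = {0, u, v, u + v} := by
  ext w
  simp only [SetLike.mem_coe, mem_span_pair, Set.mem_insert_iff, Set.mem_singleton_iff]
  constructor
  · rintro ⟨a, b, rfl⟩
    rcases eq_zero_or_eq_one_of_card_eq_two hq a with rfl | rfl <;>
      rcases eq_zero_or_eq_one_of_card_eq_two hq b with rfl | rfl <;> simp
  · rintro (rfl | rfl | rfl | rfl)
    exacts [⟨0, 0, by simp⟩, ⟨1, 0, by simp⟩, ⟨0, 1, by simp⟩, ⟨1, 1, by simp⟩]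

theorem finrank_span_pair_of_card_eq_two (hq : Fintype.card F = 2) {u v : V}
    (hu : u ≠ 0) (hv : v ≠ 0) (huv : u ≠ v) : finrank F (span F {u, v}) = 2 := by
  have hli : LinearIndependent F ![u, v] := by
    refine (LinearIndependent.pair_iff' hu).2 fun a => ?_
    rcases eq_zero_or_eq_one_of_card_eq_two hq a with rfl | rfl
    exacts [by simpa using hv.symm, by simpa using huv]
  have hrange : Set.range ![u, v] = {u, v} := by
    rw [Matrix.range_cons, Matrix.range_cons, Matrix.range_empty, Set.union_empty,
      Set.singleton_union]
  rw [← hrange, finrank_span_eq_card hli, Fintype.card_fin]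

variable (F) in
def planeThrough (x y z : V) : AffineSubspace F V :=
  AffineSubspace.mk' x (span F {y - x, z - x})

theorem finrank_direction_planeThrough (hq : Fintype.card F = 2) {x y z : V}
    (hxy : x ≠ y) (hxz : x ≠ z) (hyz : y ≠ z) :
    finrank F (planeThrough F x y z).direction = 2 := by
  rw [planeThrough, AffineSubspace.direction_mk']
  exact finrank_span_pair_of_card_eq_two hq (sub_ne_zero.2 hxy.symm) (sub_ne_zero.2 hxz.symm)
    (by simpa using hyz)

theorem coe_planeThrough (hq : Fintype.card F = 2) (x y z : V) :
    (planeThrough F x y z : Set V) = {x, y, z, y + z - x} := by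
  ext p
  rw [SetLike.mem_coe, planeThrough, AffineSubspace.mem_mk', vsub_eq_sub, ← SetLike.mem_coe,
    coe_span_pair_of_card_eq_two hq]
  simp only [Set.mem_insert_iff, Set.mem_singleton_iff, sub_eq_zero, sub_left_inj]
  rw [show y - x + (z - x) = y + z - x - x by abel, sub_left_inj]

theorem add_sub_mem_of_forall_ncard_inter_ne_three (hq : Fintype.card F = 2) {S : Set V}
    (hS : ∀ L : AffineSubspace F V, finrank F L.direction = 2 → (S ∩ L).ncard ≠ 3)
    {x y z : V} (hx : x ∈ S) (hy : y ∈ S) (hz : z ∈ S) : y + z - x ∈ S := by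
  by_cases hxy : x = y
  · simpa [hxy] using hz
  by_cases hxz : x = z
  · simpa [hxz] using hy
  by_cases hyz : y = z
  · have : y + y - x = x := by
      rw [add_self_eq_zero_of_card_eq_two hq, zero_sub, neg_eq_iff_add_eq_zero,
        add_self_eq_zero_of_card_eq_two hq]
    rwa [hyz, ← hyz, this]
  by_contra hw
  refine hS _ (finrank_direction_planeThrough hq hxy hxz hyz) ?_
  have hinter : S ∩ planeThrough F x y z = {x, y, z} := by
    rw [coe_planeThrough hq]
    ext p
    simp only [Set.mem_inter_iff, Set.mem_insert_iff, Set.mem_singleton_iff]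
    constructor
    · rintro ⟨hp, rfl | rfl | rfl | rfl⟩ <;> simp_all
    · rintro (rfl | rfl | rfl) <;> simp [*]
  rw [hinter, Set.ncard_insert_of_notMem (by simp [hxy, hxz]), Set.ncard_pair hyz]

theorem coe_affineSpan_subset_of_add_sub_mem (hq : Fintype.card F = 2) {s S : Set V}
    (hsS : s ⊆ S) (hS : ∀ x ∈ S, ∀ y ∈ S, ∀ z ∈ S, y + z - x ∈ S) :
    (affineSpan F s : Set V) ⊆ S := by
  let T : AffineSubspace F V :=
    { carrier := S
      smul_vsub_vadd_mem' := fun c p₁ p₂ p₃ h₁ h₂ h₃ => by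
        rcases eq_zero_or_eq_one_of_card_eq_two hq c with rfl | rfl
        · simpa using h₃
        · simpa [sub_add_eq_add_sub] using hS p₂ h₂ p₁ h₁ p₃ h₃ }
  exact affineSpan_le (Q := T) |>.2 hsS

end CardTwo

theorem lemma2_i
    (F : Type*) [Field F] [Fintype F] (hq : Fintype.card F = 2)
    (t : ℕ) (S : Set (Fin t → F))
    (P : Fin (t + 1) → Fin t → F)
    (hPS : ∀ i, P i ∈ S)
    (hspan : affineSpan F (Set.range P) = ⊤)
    (hplane : ¬ ∃ L : AffineSubspace F (Fin t → F),
      Module.finrank F L.direction = 2 ∧ (S ∩ L).ncard = 3) :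
    S = Set.univ := by
  have hclosed : ∀ x ∈ S, ∀ y ∈ S, ∀ z ∈ S, y + z - x ∈ S := fun x hx y hy z hz =>
    add_sub_mem_of_forall_ncard_inter_ne_three hq (fun L hL h3 => hplane ⟨L, hL, h3⟩) hx hy hz
  have hspan_sub := coe_affineSpan_subset_of_add_sub_mem hq (Set.range_subset_iff.2 hPS) hclosed
  rwa [hspan, AffineSubspace.top_coe, Set.univ_subset_iff] at hspan_sub
end

section
/- Let q ≥ 3 and let S ⊆ F_q^t contain t+1 points in general position. If every affine line meeting S in at least two points is entirely contained in S, then S = F_q^t. -/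
/-!
The line hypothesis makes `S` closed under `lineMap x y a = (1 - a) • x + a • y` for all
`x, y ∈ S` and all scalars `a`. Given a scalar `λ ∉ {0, 1}` (this is where `q ≥ 3` enters), such
closure already yields `x - y + z ∈ S` for `x, y, z ∈ S`: the point
`lineMap y (lineMap z x λ) (1 - λ)⁻¹` equals `z + (λ / (1 - λ)) • (x - y)`, and rescaling it from
`z` by `(1 - λ) / λ` gives `x - y + z`. Hence `S` is an affine subspace, and it contains points
spanning the whole space.
-/

open AffineMap

section LineClosed

variable {k V : Type*} [Field k] [AddCommGroup V] [Module k V]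

variable (k) in
def IsLineClosed (S : Set V) : Prop :=
  ∀ x ∈ S, ∀ y ∈ S, ∀ a : k, lineMap x y a ∈ S

theorem isLineClosed_of_forall_line [Finite V] {S : Set V}
    (h : ∀ ℓ : AffineSubspace k V, Module.finrank k ℓ.direction = 1 → 2 ≤ (S ∩ ℓ).ncard →
      (ℓ : Set V) ⊆ S) :
    IsLineClosed k S := by
  intro x hx y hy a
  rcases eq_or_ne x y with rfl | hxy
  · rwa [lineMap_same_apply]
  refine h (affineSpan k {x, y}) ?_ ?_ (lineMap_mem_affineSpan_pair a x y)
  · rw [direction_affineSpan, vectorSpan_pair]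
    exact finrank_span_singleton (sub_ne_zero.mpr hxy)
  · calc 2 = ({x, y} : Set V).ncard := (Set.ncard_pair hxy).symm
      _ ≤ (S ∩ affineSpan k {x, y}).ncard :=
        Set.ncard_le_ncard
          (Set.subset_inter (Set.insert_subset hx (by simpa)) (subset_affineSpan k _))
          (Set.toFinite _)

namespace IsLineClosed

variable {S : Set V} {lam : k}

theorem sub_add_mem (hS : IsLineClosed k S) (hlam₀ : lam ≠ 0) (hlam₁ : lam ≠ 1)
    {x y z : V} (hx : x ∈ S) (hy : y ∈ S) (hz : z ∈ S) : x - y + z ∈ S := by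
  have hw : z + (lam / (1 - lam)) • (x - y) ∈ S := by
    convert hS y hy _ (hS z hz x hx lam) (1 - lam)⁻¹ using 1
    simp only [lineMap_apply_module]
    match_scalars <;> grind
  convert hS z hz _ hw ((1 - lam) / lam) using 1
  rw [lineMap_apply_module]
  match_scalars <;> grind

theorem smul_sub_add_mem (hS : IsLineClosed k S) (hlam₀ : lam ≠ 0) (hlam₁ : lam ≠ 1)
    (c : k) {x y z : V} (hx : x ∈ S) (hy : y ∈ S) (hz : z ∈ S) : c • (x - y) + z ∈ S := by
  convert hS.sub_add_mem hlam₀ hlam₁ (hS y hy x hx c) hy hz using 1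
  rw [lineMap_apply_module]
  module

def toAffineSubspace (hS : IsLineClosed k S) (hlam₀ : lam ≠ 0) (hlam₁ : lam ≠ 1) :
    AffineSubspace k V where
  carrier := S
  smul_vsub_vadd_mem' c _ _ _ hx hy hz := hS.smul_sub_add_mem hlam₀ hlam₁ c hx hy hz

theorem coe_affineSpan (hS : IsLineClosed k S) (hlam₀ : lam ≠ 0) (hlam₁ : lam ≠ 1) :
    (affineSpan k S : Set V) = S :=
  congrArg SetLike.coe (AffineSubspace.affineSpan_coe (hS.toAffineSubspace hlam₀ hlam₁))

end IsLineClosed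

end LineClosed

theorem exists_ne_zero_ne_one_of_three_le_card {α : Type*} [Zero α] [One α] [Fintype α]
    (hq : 3 ≤ Fintype.card α) : ∃ a : α, a ≠ 0 ∧ a ≠ 1 := by
  classical
  have hcard : ({0, 1} : Finset α).card < Finset.univ.card :=
    Finset.card_le_two.trans_lt (Finset.card_univ (α := α) ▸ hq)
  obtain ⟨a, -, ha⟩ := Finset.exists_mem_notMem_of_card_lt_card hcard
  exact ⟨a, by simpa [not_or] using ha⟩

theorem lemma2_ii
    (F : Type*) [Field F] [Fintype F] (hq : 3 ≤ Fintype.card F)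
    (t : ℕ) (S : Set (Fin t → F))
    (P : Fin (t + 1) → Fin t → F)
    (hPS : ∀ i, P i ∈ S)
    (hspan : affineSpan F (Set.range P) = ⊤)
    (hline : ∀ ℓ : AffineSubspace F (Fin t → F),
      Module.finrank F ℓ.direction = 1 → 2 ≤ (S ∩ ℓ).ncard →
      (ℓ : Set (Fin t → F)) ⊆ S) :
    S = Set.univ := by
  obtain ⟨lam, hlam₀, hlam₁⟩ := exists_ne_zero_ne_one_of_three_le_card hq
  have hS : IsLineClosed F S := isLineClosed_of_forall_line hline
  refine Set.eq_univ_of_univ_subset ?_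
  calc Set.univ = (affineSpan F (Set.range P) : Set (Fin t → F)) := by
        rw [hspan, AffineSubspace.top_coe]
    _ ⊆ affineSpan F S := affineSpan_mono F (Set.range_subset_iff.mpr hPS)
    _ = S := hS.coe_affineSpan hlam₀ hlam₁
end

section
/- Let m ≥ 2 be an integer and S ⊆ F_q^t a set containing t+1 points in general position. If every affine line meeting S in at least two points contains at least m+1 points of S, then #S ≥ (m^{t+1} − 1)/(m − 1). -/
/-!
If `p₀ ∈ S` lies outside an affine subspace `H`, the lines joining `p₀` to the points of `S ∩ H`
pairwise meet only in `p₀`, and by the line condition each of them carries at least `m` points of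
`S` other than `p₀`. So any subspace containing `p₀` and `H` meets `S` in at least
`m · #(S ∩ H) + 1` points. Adding the `t + 1` points in general position one at a time, the span of
all of them, which is the whole space, contains at least `1 + m + ⋯ + m ^ t` points of `S`.
-/

open Module Finset

section

variable {k V P : Type*} [Field k] [AddCommGroup V] [Module k V] [AddTorsor V P]

theorem finrank_direction_affineSpan_pair {p q : P} (h : p ≠ q) :
    finrank k (line[k, p, q]).direction = 1 := by
  rw [direction_affineSpan, vectorSpan_pair, finrank_span_singleton (vsub_ne_zero.2 h)]

theorem eq_of_mem_affineSpan_pair_of_mem {H : AffineSubspace k P} {p q x : P} (hp : p ∉ H)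
    (hq : q ∈ H) (hx : x ∈ line[k, p, q]) (hxH : x ∈ H) : x = q := by
  by_contra hxq
  have hp' : p ∈ line[k, x, q] :=
    (collinear_insert_of_mem_affineSpan_pair hx).mem_affineSpan_of_mem_of_ne
      (by simp) (by simp) (by simp) hxq
  exact hp (affineSpan_pair_le_of_mem_of_mem hxH hq hp')

theorem affineSpan_pair_inter_affineSpan_pair_subset {H : AffineSubspace k P} {p q q' : P}
    (hp : p ∉ H) (hq : q ∈ H) (hq' : q' ∈ H) (hqq' : q ≠ q') :
    (line[k, p, q] : Set P) ∩ line[k, p, q'] ⊆ {p} := by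
  rintro x ⟨hx, hx'⟩
  by_contra hxp
  have hq'x : q' ∈ line[k, p, x] :=
    (collinear_insert_of_mem_affineSpan_pair hx').mem_affineSpan_of_mem_of_ne
      (by simp) (by simp) (by simp) (Ne.symm hxp)
  have hq'q : q' ∈ line[k, p, q] :=
    affineSpan_pair_le_of_mem_of_mem (left_mem_affineSpan_pair k p q) hx hq'x
  exact hqq' (eq_of_mem_affineSpan_pair_of_mem hp hq hq'q hq').symm

theorem mul_ncard_inter_add_one_le_ncard_inter (m : ℕ) {S : Set P} (hS : S.Finite)
    {H E : AffineSubspace k P} (hHE : H ≤ E) {p : P} (hpS : p ∈ S) (hpH : p ∉ H) (hpE : p ∈ E)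
    (hline : ∀ q ∈ S ∩ H, m + 1 ≤ (S ∩ line[k, p, q]).ncard) :
    m * (S ∩ H).ncard + 1 ≤ (S ∩ E).ncard := by
  classical
  set A := (hS.inter_of_left H).toFinset
  set B : P → Finset P := fun q ↦ (hS.inter_of_left line[k, p, q]).toFinset.erase p
  have hB : ∀ q ∈ A, m ≤ #(B q) := fun q hq ↦ by
    rw [card_erase_of_mem (by simpa using ⟨hpS, left_mem_affineSpan_pair k p q⟩),
      ← Set.ncard_eq_toFinset_card _ (hS.inter_of_left _)]
    have := hline q (by simpa [A] using hq)
    omega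
  have hdisj : (A : Set P).PairwiseDisjoint B := fun q hq q' hq' hqq' ↦ by
    simp only [A, Set.Finite.coe_toFinset] at hq hq'
    refine disjoint_left.2 fun x hx hx' ↦ ?_
    simp only [B, mem_erase, Set.Finite.mem_toFinset] at hx hx'
    exact hx.1 (affineSpan_pair_inter_affineSpan_pair_subset hpH hq.2 hq'.2 hqq' ⟨hx.2.2, hx'.2.2⟩)
  have hsub : A.biUnion B ⊆ (hS.inter_of_left E).toFinset.erase p := fun x hx ↦ by
    simp only [A, B, mem_biUnion, mem_erase, Set.Finite.mem_toFinset] at hx ⊢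
    obtain ⟨q, ⟨-, hqH⟩, hxp, hxS, hxl⟩ := hx
    exact ⟨hxp, hxS, affineSpan_pair_le_of_mem_of_mem hpE (hHE hqH) hxl⟩
  calc m * (S ∩ H).ncard + 1 = #A • m + 1 := by
        rw [Set.ncard_eq_toFinset_card _ (hS.inter_of_left H), smul_eq_mul, mul_comm]
    _ ≤ #(A.biUnion B) + 1 := by
        rw [card_biUnion hdisj]
        exact Nat.add_le_add_right (card_nsmul_le_sum _ _ _ hB) 1
    _ ≤ #((hS.inter_of_left E).toFinset.erase p) + 1 := Nat.add_le_add_right (card_le_card hsub) 1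
    _ = (S ∩ E).ncard := by
        rw [card_erase_add_one (by simpa using ⟨hpS, hpE⟩),
          ← Set.ncard_eq_toFinset_card _ (hS.inter_of_left _)]

theorem AffineIndependent.zero_notMem_affineSpan_range_tail {n : ℕ} {p : Fin (n + 1) → P}
    (hp : AffineIndependent k p) : p 0 ∉ affineSpan k (Set.range (Fin.tail p)) := by
  have : Set.range (Fin.tail p) = p '' (Set.univ \ {0}) := by
    rw [← Set.compl_eq_univ_sdiff, ← Fin.range_succ, ← Set.range_comp]; rfl
  exact this ▸ hp.notMem_affineSpan_sdiff 0 Set.univ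

theorem add_one_le_ncard_inter_affineSpan_pair (m : ℕ) {S : Set P} (hS : S.Finite)
    (hline : ∀ ℓ : AffineSubspace k P,
      finrank k ℓ.direction = 1 → 2 ≤ (S ∩ ℓ).ncard → m + 1 ≤ (S ∩ ℓ).ncard)
    {p q : P} (hp : p ∈ S) (hq : q ∈ S) (hpq : p ≠ q) :
    m + 1 ≤ (S ∩ line[k, p, q]).ncard :=
  hline _ (finrank_direction_affineSpan_pair hpq) <| (Set.one_lt_ncard (hS.inter_of_left _)).2
    ⟨p, ⟨hp, left_mem_affineSpan_pair k p q⟩, q, ⟨hq, right_mem_affineSpan_pair k p q⟩, hpq⟩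

theorem geom_sum_le_ncard_inter_affineSpan (m : ℕ) {S : Set P} (hS : S.Finite)
    (hline : ∀ ℓ : AffineSubspace k P,
      finrank k ℓ.direction = 1 → 2 ≤ (S ∩ ℓ).ncard → m + 1 ≤ (S ∩ ℓ).ncard) :
    ∀ {n : ℕ} {p : Fin (n + 1) → P}, AffineIndependent k p → (∀ i, p i ∈ S) →
      ∑ i ∈ range (n + 1), m ^ i ≤ (S ∩ affineSpan k (Set.range p)).ncard
  | 0, p, _, hpS => by
    rw [sum_range_one, pow_zero]
    exact (Set.ncard_pos (hS.inter_of_left _)).2 ⟨p 0, hpS 0, subset_affineSpan k _ ⟨0, rfl⟩⟩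
  | n + 1, p, hp, hpS => by
    set H := affineSpan k (Set.range (Fin.tail p))
    have hp₀ : p 0 ∉ H := hp.zero_notMem_affineSpan_range_tail
    have hHE : H ≤ affineSpan k (Set.range p) :=
      affineSpan_mono k (Fin.range_fin_succ p ▸ Set.subset_insert _ _)
    have hlines : ∀ q ∈ S ∩ H, m + 1 ≤ (S ∩ line[k, p 0, q]).ncard := fun q hq ↦
      add_one_le_ncard_inter_affineSpan_pair m hS hline (hpS 0) hq.1 fun h ↦ hp₀ (h ▸ hq.2)
    calc ∑ i ∈ range (n + 1 + 1), m ^ i = m * ∑ i ∈ range (n + 1), m ^ i + 1 := geom_sum_succ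
      _ ≤ m * (S ∩ H).ncard + 1 := by
        gcongr
        exact geom_sum_le_ncard_inter_affineSpan m hS hline
          (hp.comp_embedding (Fin.succEmb _)) fun i ↦ hpS i.succ
      _ ≤ (S ∩ affineSpan k (Set.range p)).ncard :=
        mul_ncard_inter_add_one_le_ncard_inter m hS hHE (hpS 0) hp₀
          (subset_affineSpan k _ ⟨0, rfl⟩) hlines

end

theorem lemma2_iv
    (F : Type*) [Field F] [Fintype F]
    (m : ℕ) (hm : 2 ≤ m)
    (t : ℕ) (S : Set (Fin t → F))
    (P : Fin (t + 1) → Fin t → F)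
    (hPS : ∀ i, P i ∈ S)
    (hspan : affineSpan F (Set.range P) = ⊤)
    (hline : ∀ ℓ : AffineSubspace F (Fin t → F),
      Module.finrank F ℓ.direction = 1 → 2 ≤ (S ∩ ℓ).ncard →
      m + 1 ≤ (S ∩ ℓ).ncard) :
    (m ^ (t + 1) - 1) / (m - 1) ≤ S.ncard := by
  have hP : AffineIndependent F P := by
    rw [affineIndependent_iff_le_finrank_vectorSpan F P (Fintype.card_fin _),
      AffineSubspace.vectorSpan_eq_top_of_affineSpan_eq_top F _ _ hspan, finrank_top,
      finrank_fin_fun]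
  have h := geom_sum_le_ncard_inter_affineSpan m S.toFinite hline hP hPS
  rwa [hspan, AffineSubspace.top_coe, Set.inter_univ, Nat.geomSum_eq hm] at h
end

section
/- Let f_1,...,f_r be polynomials over F_q in n variables with degrees summing to d < n. If the common zero set Z in F_q^n is nonempty and is not an affine subspace of F_q^n, then #Z > q^{n−d}. -/
/-!
Suppose `#Z ≤ q ^ m` with `m = n - d`. Multiplying by the Chevalley–Warning indicator
`∏ (1 - f_i ^ (q - 1))` shows that `∑_{z ∈ Z} g z = 0` for every polynomial `g` of degree
`< (q - 1) m`. In the other direction, a function on `F^m` whose sums against all polynomials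
of degree `< (q - 1) m - k` vanish is itself a polynomial of degree `≤ k`.

Pick `z₀ ∈ Z` and a linear `ℓ : F^n → F^m` separating `z₀` from the rest of `Z`. Pushed forward
along `ℓ`, the fibre sizes `#(Z ∩ ℓ⁻¹ b)` are constant mod `p`, and equal to `1` at `ℓ z₀`, so
every fibre is nonempty; as `#Z ≤ q ^ m`, every fibre is a singleton `{ψ b}`. Pushing forward
the weights `z ↦ z i` shows that every coordinate of `ψ` is affine, so `Z = range ψ` is an
affine subspace.
-/

open MvPolynomial Finset

theorem FiniteField.sum_pow_eq {F : Type*} [Field F] [Fintype F] [DecidableEq F] (e : ℕ) :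
    ∑ x : F, x ^ e = if e ≠ 0 ∧ Fintype.card F - 1 ∣ e then -1 else 0 := by
  rcases eq_or_ne e 0 with rfl | he
  · simp
  have hzero : ∑ x : {x : F // ¬x ≠ 0}, (x : F) ^ e = 0 :=
    Finset.sum_eq_zero fun x _ => by rw [not_not.mp x.2, zero_pow he]
  rw [← Fintype.sum_subtype_add_sum_subtype (· ≠ 0), hzero,
    ← (unitsEquivNeZero (G₀ := F)).sum_comp]
  simp [he, FiniteField.sum_pow_units]

theorem Finsupp.eq_zero_or_exists_eq_single_one_of_degree_le_one {σ : Type*} {v : σ →₀ ℕ}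
    (hv : v.degree ≤ 1) : v = 0 ∨ ∃ j, v = Finsupp.single j 1 := by
  classical
  replace hv : Multiset.card (Finsupp.toMultiset v) ≤ 1 := (Finsupp.card_toMultiset v).trans_le hv
  rcases Nat.le_one_iff_eq_zero_or_eq_one.mp hv with h | h
  · exact .inl (by simpa using Finsupp.toMultiset_eq_iff.mp (Multiset.card_eq_zero.mp h))
  · obtain ⟨j, hj⟩ := Multiset.card_eq_one.mp h
    exact .inr ⟨j, by simpa using Finsupp.toMultiset_eq_iff.mp hj⟩

theorem MvPolynomial.eval_smul_sub_add_of_totalDegree_le_one {R σ : Type*} [CommRing R]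
    {Φ : MvPolynomial σ R} (hΦ : Φ.totalDegree ≤ 1) (c : R) (a b e : σ → R) :
    eval (c • (a - b) + e) Φ = c * (eval a Φ - eval b Φ) + eval e Φ := by
  simp only [eval_eq, ← Finset.sum_sub_distrib, Finset.mul_sum, ← Finset.sum_add_distrib]
  refine Finset.sum_congr rfl fun v hv => ?_
  rcases Finsupp.eq_zero_or_exists_eq_single_one_of_degree_le_one
    ((le_totalDegree hv).trans hΦ) with rfl | ⟨j, rfl⟩
  · simp
  · simp only [Finsupp.support_single _ one_ne_zero, prod_singleton,
      Finsupp.single_eq_same, pow_one, Pi.add_apply, Pi.smul_apply, Pi.sub_apply, smul_eq_mul]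
    ring

theorem sum_filter_indicator_one_mul {α M : Type*} [Fintype α] [NonAssocSemiring M]
    (S : Finset α) (p : α → Prop) [DecidablePred p] (h : α → M) :
    ∑ x with p x, (S : Set α).indicator 1 x * h x = ∑ x ∈ S with p x, h x := by
  classical
  simp only [Set.indicator_apply, mem_coe, Pi.one_apply, ite_mul, one_mul, zero_mul, sum_ite_mem]
  rw [inter_comm, inter_filter, inter_univ]

section Composition

variable {R : Type*} [CommSemiring R] {σ τ : Type*}

theorem MvPolynomial.totalDegree_bind₁_le_of_totalDegree_le_one {L : τ → MvPolynomial σ R}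
    (hL : ∀ j, (L j).totalDegree ≤ 1) (g : MvPolynomial τ R) :
    (bind₁ L g).totalDegree ≤ g.totalDegree := by
  conv_lhs => rw [g.as_sum]
  rw [map_sum]
  refine totalDegree_finsetSum_le fun v hv => ?_
  rw [bind₁_monomial]
  calc (C (coeff v g) * ∏ j ∈ v.support, L j ^ v j).totalDegree
      ≤ 0 + ∑ j ∈ v.support, v j * 1 :=
        (totalDegree_mul _ _).trans <| add_le_add (totalDegree_C _).le <|
          (totalDegree_finsetProd _ _).trans <| Finset.sum_le_sum fun j _ =>
            (totalDegree_pow _ _).trans (Nat.mul_le_mul_left _ (hL j))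
    _ ≤ g.totalDegree := by simpa [Finsupp.sum] using le_totalDegree hv

theorem MvPolynomial.exists_totalDegree_le_eval_eq_eval_linearMap [Fintype σ] [DecidableEq σ]
    (ℓ : (σ → R) →ₗ[R] (τ → R)) (g : MvPolynomial τ R) :
    ∃ Q : MvPolynomial σ R, Q.totalDegree ≤ g.totalDegree ∧ ∀ x, eval x Q = eval (ℓ x) g := by
  set L : τ → MvPolynomial σ R := fun j => ∑ i, C (ℓ (Pi.single i 1) j) * X i
  have hL : ∀ j, (L j).totalDegree ≤ 1 := fun j =>
    totalDegree_finsetSum_le fun i _ => (totalDegree_mul _ _).trans <| by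
      rw [totalDegree_C, zero_add]
      exact (totalDegree_monomial_le (Finsupp.single i 1) 1).trans (by simp)
  refine ⟨bind₁ L g, totalDegree_bind₁_le_of_totalDegree_le_one hL g, fun x => ?_⟩
  rw [eval, eval₂Hom_bind₁, eval]
  congr 2 with j
  conv_rhs => rw [pi_eq_sum_univ' x]
  simp [L, mul_comm]

end Composition

section LinearMap

variable {F : Type*} [Field F] {V W : Type*} [AddCommGroup V] [Module F V] [AddCommGroup W]
  [Module F W]

theorem natCard_ker_applyₗ_mul_natCard {t : V} (ht : t ≠ 0) :
    Nat.card (LinearMap.applyₗ (R := F) (M₂ := W) t).ker * Nat.card W =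
      Nat.card (V →ₗ[F] W) := by
  have hsurj : Function.Surjective (LinearMap.applyₗ (R := F) (M₂ := W) t) := fun w => by
    obtain ⟨φ, hφ⟩ := Module.Projective.exists_dual_ne_zero F ht
    exact ⟨φ.smulRight ((φ t)⁻¹ • w), by simp [hφ]⟩
  have := (LinearMap.applyₗ (R := F) (M₂ := W) t).toAddMonoidHom.ker.card_mul_index
  rwa [AddSubgroup.index_ker, AddMonoidHom.range_eq_top.mpr hsurj, AddSubgroup.card_top] at this

-- Union bound: for `t ≠ 0`, only a `1 / #W` fraction of the linear maps kill `t`.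
theorem exists_linearMap_forall_apply_ne_zero [Finite V] [Finite W] (T : Finset V)
    (hT0 : 0 ∉ T) (hT : #T < Nat.card W) : ∃ ℓ : V →ₗ[F] W, ∀ t ∈ T, ℓ t ≠ 0 := by
  classical
  have : Finite (V →ₗ[F] W) := Finite.of_injective _ DFunLike.coe_injective
  have : Fintype (V →ₗ[F] W) := Fintype.ofFinite _
  by_contra! h
  have hcover : (univ : Finset (V →ₗ[F] W)) ⊆ T.biUnion fun t => {ℓ | ℓ t = 0} := fun ℓ _ => by
    obtain ⟨t, ht, hℓ⟩ := h ℓ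
    exact mem_biUnion.mpr ⟨t, ht, mem_filter.mpr ⟨mem_univ ℓ, hℓ⟩⟩
  have hker : ∀ t ∈ T, #{ℓ : V →ₗ[F] W | ℓ t = 0} * Nat.card W = Nat.card (V →ₗ[F] W) :=
    fun t ht => by
      rw [← natCard_ker_applyₗ_mul_natCard (ne_of_mem_of_not_mem ht hT0), ← Fintype.card_subtype,
        ← Nat.card_eq_fintype_card]
      rfl
  have hle := (card_le_card hcover).trans card_biUnion_le
  rw [card_univ, ← Nat.card_eq_fintype_card] at hle
  have hmul := Nat.mul_le_mul_right (Nat.card W) hle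
  rw [Finset.sum_mul, Finset.sum_congr rfl hker, sum_const, smul_eq_mul] at hmul
  have hpos : 0 < Nat.card (V →ₗ[F] W) := Nat.card_pos
  nlinarith

theorem exists_linearMap_apply_eq_apply_imp_eq [Finite V] [Finite W] {S : Finset V} {z₀ : V}
    (hz₀ : z₀ ∈ S) (hS : #S ≤ Nat.card W) :
    ∃ ℓ : V →ₗ[F] W, ∀ z ∈ S, ℓ z = ℓ z₀ → z = z₀ := by
  classical
  have hT : #((S.erase z₀).image (· - z₀)) < Nat.card W :=
    card_image_le.trans_lt <| by rw [card_erase_of_mem hz₀]; have := card_pos.mpr ⟨z₀, hz₀⟩; omega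
  obtain ⟨ℓ, hℓ⟩ := exists_linearMap_forall_apply_ne_zero (F := F) _ (by simp [sub_eq_zero]) hT
  refine ⟨ℓ, fun z hz hzℓ => by_contra fun hne => ?_⟩
  exact hℓ _ (mem_image_of_mem _ (mem_erase.mpr ⟨hne, hz⟩)) (by simp [hzℓ])

end LinearMap

section MomentsVanish

variable {F : Type*} [Field F] [Fintype F]

local notation "q" => Fintype.card F

theorem MvPolynomial.eval_prod_one_sub_pow_card_sub_one {σ ι : Type*} [Fintype ι]
    (f : ι → MvPolynomial σ F) (x : σ → F) :
    eval x (∏ i, (1 - f i ^ (q - 1))) = {x | ∀ i, eval x (f i) = 0}.indicator 1 x := by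
  classical
  have hq : q - 1 ≠ 0 := (Nat.sub_pos_of_lt Fintype.one_lt_card).ne'
  simp only [map_prod, map_sub, map_one, map_pow, Set.indicator_apply, Set.mem_ofPred_eq,
    Pi.one_apply]
  split_ifs with hx
  · exact Finset.prod_eq_one fun i _ => by rw [hx i, zero_pow hq, sub_zero]
  · obtain ⟨i, hi⟩ := not_forall.mp hx
    exact Finset.prod_eq_zero (mem_univ i)
      (by rw [FiniteField.pow_card_sub_one_eq_one _ hi, sub_self])

variable {σ : Type*} [Fintype σ] [DecidableEq σ]

theorem sum_prod_pow_add_card_sub_one_sub (α β : σ →₀ ℕ) (hα : ∀ j, α j ≤ q - 1)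
    (hβα : β.degree ≤ α.degree) :
    ∑ x : σ → F, ∏ j, x j ^ (β j + (q - 1 - α j)) =
      if β = α then (-1) ^ Fintype.card σ else 0 := by
  classical
  have hq : 1 ≤ q - 1 := Nat.le_sub_of_add_le Fintype.one_lt_card
  rw [← Fintype.prod_sum fun j (c : F) => c ^ (β j + (q - 1 - α j))]
  simp_rw [FiniteField.sum_pow_eq]
  split_ifs with hβ
  · subst hβ
    rw [Finset.prod_eq_pow_card (b := -1), Finset.card_univ]
    intro j _
    rw [if_pos ⟨by omega, by rw [Nat.add_sub_cancel' (hα j)]⟩]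
  · refine Finset.prod_eq_zero_iff.mpr ?_
    by_contra! hne
    have hαβ : ∀ j ∈ univ, α j ≤ β j := fun j _ => by
      obtain ⟨hpos, hdvd⟩ := (ite_ne_right_iff.mp (hne j (mem_univ j))).1
      have := Nat.le_of_dvd (Nat.pos_of_ne_zero hpos) hdvd
      have := hα j
      omega
    have hsum : ∑ j, α j = ∑ j, β j := by
      rw [Finsupp.degree_eq_sum, Finsupp.degree_eq_sum] at hβα
      exact le_antisymm (Finset.sum_le_sum hαβ) hβα
    exact hβ (Finsupp.ext fun j => ((Finset.sum_eq_sum_iff_of_le hαβ).mp hsum j (mem_univ j)).symm)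

def MomentsVanish (w : (σ → F) → F) (N : ℕ) : Prop :=
  ∀ g : MvPolynomial σ F, g.totalDegree < N → ∑ x, w x * eval x g = 0

theorem momentsVanish_indicator_zeroLocus {ι : Type*} [Fintype ι] (f : ι → MvPolynomial σ F) :
    MomentsVanish ({x | ∀ i, eval x (f i) = 0}.indicator 1)
      ((q - 1) * (Fintype.card σ - ∑ i, (f i).totalDegree)) := by
  intro g hg
  have hP : (∏ i, (1 - f i ^ (q - 1))).totalDegree ≤ (q - 1) * ∑ i, (f i).totalDegree := by
    rw [Finset.mul_sum]
    refine (totalDegree_finsetProd _ _).trans (Finset.sum_le_sum fun i _ => ?_)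
    refine (totalDegree_sub _ _).trans (max_le (by simp) ?_)
    exact (totalDegree_pow _ _)
  have hgP := totalDegree_mul g (∏ i, (1 - f i ^ (q - 1)))
  have hlt : (g * ∏ i, (1 - f i ^ (q - 1))).totalDegree < (q - 1) * Fintype.card σ := by
    obtain hd | hd := le_or_gt (∑ i, (f i).totalDegree) (Fintype.card σ)
    · have := Nat.mul_add (q - 1) (Fintype.card σ - ∑ i, (f i).totalDegree) (∑ i, (f i).totalDegree)
      rw [Nat.sub_add_cancel hd] at this
      omega
    · simp [Nat.sub_eq_zero_of_le hd.le] at hg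
  simpa [← eval_prod_one_sub_pow_card_sub_one, mul_comm] using
    MvPolynomial.sum_eval_eq_zero _ hlt

theorem MomentsVanish.exists_totalDegree_le {w : (σ → F) → F} {N k : ℕ} (hw : MomentsVanish w N)
    (hNk : (q - 1) * Fintype.card σ ≤ N + k) :
    ∃ Φ : MvPolynomial σ F, Φ.totalDegree ≤ k ∧ ∀ x, eval x Φ = w x := by
  obtain ⟨Φ, hΦ, hΦw⟩ : ∃ Φ ∈ restrictDegree σ F (q - 1), evalₗ F σ Φ = w :=
    Submodule.mem_map.mp (map_restrict_dom_evalₗ F σ ▸ Submodule.mem_top)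
  rw [mem_restrictDegree] at hΦ
  refine ⟨Φ, ?_, fun x => congrFun hΦw x⟩
  -- Only the top monomial `x ^ α` of `Φ` survives summation against `∏ j, x j ^ (q - 1 - α j)`.
  by_contra! hk
  have hsupp : Φ.support.Nonempty := Finset.nonempty_iff_ne_empty.mpr fun h => by
    simp [support_eq_empty.mp h] at hk
  obtain ⟨α, hαΦ, hα⟩ := Finset.exists_mem_eq_sup Φ.support hsupp (fun s => s.degree)
  have hαdeg : α.degree = Φ.totalDegree := hα.symm
  set g : MvPolynomial σ F := ∏ j, X j ^ (q - 1 - α j)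
  have hg : g.totalDegree < N := by
    have hsum : ∑ j, (q - 1 - α j) + α.degree = (q - 1) * Fintype.card σ := by
      rw [Finsupp.degree_eq_sum, ← Finset.sum_add_distrib, Finset.sum_congr rfl
        fun j _ => Nat.sub_add_cancel (hΦ α hαΦ j)]
      simp [mul_comm]
    calc g.totalDegree ≤ ∑ j, (q - 1 - α j) :=
          (totalDegree_finsetProd _ _).trans
            (Finset.sum_le_sum fun j _ => (totalDegree_X_pow _ _).le)
      _ < N := by omega
  have hmoment : ∑ x, eval x Φ * eval x g = coeff α Φ * (-1) ^ Fintype.card σ := calc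
    _ = ∑ x : σ → F, ∑ β ∈ Φ.support, coeff β Φ * ∏ j, x j ^ (β j + (q - 1 - α j)) := by
      refine Finset.sum_congr rfl fun x _ => ?_
      simp only [eval_eq' x Φ, g, map_prod, map_pow, eval_X, Finset.sum_mul, mul_assoc,
        ← Finset.prod_mul_distrib, ← pow_add]
    _ = ∑ β ∈ Φ.support, coeff β Φ * ∑ x : σ → F, ∏ j, x j ^ (β j + (q - 1 - α j)) := by
      rw [Finset.sum_comm]
      simp_rw [Finset.mul_sum]
    _ = ∑ β ∈ Φ.support, coeff β Φ * if β = α then (-1) ^ Fintype.card σ else 0 :=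
      Finset.sum_congr rfl fun β hβ => by
        rw [sum_prod_pow_add_card_sub_one_sub α β (hΦ α hαΦ) (hαdeg ▸ le_totalDegree hβ)]
    _ = _ := by simp [hαΦ]
  have hzero := hw g hg
  simp only [← hΦw, evalₗ_apply, hmoment] at hzero
  exact mem_support_iff.mp hαΦ (by simpa using hzero)

theorem MomentsVanish.mul_eval {w : (σ → F) → F} {N : ℕ} (hw : MomentsVanish w N)
    (h : MvPolynomial σ F) : MomentsVanish (fun x => w x * eval x h) (N - h.totalDegree) :=
  fun g hg => by
    simpa [mul_assoc, mul_comm (eval _ h)] using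
      hw (h * g) ((totalDegree_mul h g).trans_lt (by omega))

theorem MomentsVanish.pushforward [DecidableEq F] {τ : Type*} [Fintype τ] [DecidableEq τ]
    {w : (σ → F) → F} {N : ℕ} (hw : MomentsVanish w N) (ℓ : (σ → F) →ₗ[F] (τ → F)) :
    MomentsVanish (fun b => ∑ x with ℓ x = b, w x) N := by
  intro g hg
  obtain ⟨Q, hQ, hQg⟩ := exists_totalDegree_le_eval_eq_eval_linearMap ℓ g
  calc ∑ b, (∑ x with ℓ x = b, w x) * eval b g
      = ∑ b, ∑ x with ℓ x = b, w x * eval x Q := by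
        refine Finset.sum_congr rfl fun b _ => ?_
        rw [Finset.sum_mul]
        refine Finset.sum_congr rfl fun x hx => ?_
        rw [hQg, (Finset.mem_filter.mp hx).2]
    _ = ∑ x, w x * eval x Q := Finset.sum_fiberwise _ _ _
    _ = 0 := hw Q (hQ.trans_lt hg)

variable {τ : Type*} [Fintype τ] [DecidableEq τ] [DecidableEq F] {S : Finset (σ → F)}

theorem card_filter_apply_eq_eq_one
    (hS : MomentsVanish ((S : Set (σ → F)).indicator 1) ((q - 1) * Fintype.card τ))
    (ℓ : (σ → F) →ₗ[F] (τ → F)) (hcard : #S ≤ Nat.card (τ → F)) {z₀ : σ → F} (hz₀ : z₀ ∈ S)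
    (hℓ : ∀ z ∈ S, ℓ z = ℓ z₀ → z = z₀) (b : τ → F) : #{x ∈ S | ℓ x = b} = 1 := by
  obtain ⟨Φ, hΦ0, hΦ⟩ := (hS.pushforward ℓ).exists_totalDegree_le (k := 0) le_self_add
  obtain ⟨c, rfl⟩ : ∃ c, Φ = C c := ⟨_, totalDegree_eq_zero_iff_eq_C.mp (Nat.le_zero.mp hΦ0)⟩
  have hfiber : ∀ b, (#{x ∈ S | ℓ x = b} : F) = c := fun b => by
    simpa [← hΦ b] using (sum_filter_indicator_one_mul S (ℓ · = b) fun _ => (1 : F)).symm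
  have hz₀fiber : {x ∈ S | ℓ x = ℓ z₀} = {z₀} := by
    ext z
    simp only [mem_filter, mem_singleton]
    exact ⟨fun ⟨hz, hzℓ⟩ => hℓ z hz hzℓ, by rintro rfl; exact ⟨hz₀, rfl⟩⟩
  have hpos : ∀ b, 1 ≤ #{x ∈ S | ℓ x = b} := fun b => Nat.one_le_iff_ne_zero.mpr fun h0 => by
    simpa [h0, ← hfiber (ℓ z₀), hz₀fiber] using hfiber b
  have hsum : ∑ b, #{x ∈ S | ℓ x = b} ≤ ∑ _b : τ → F, 1 := by
    rw [← card_eq_sum_card_fiberwise fun x _ => mem_univ (ℓ x)]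
    simpa using hcard
  have hsum_eq := le_antisymm (sum_le_sum fun b _ => hpos b) hsum
  exact ((sum_eq_sum_iff_of_le fun b _ => hpos b).mp hsum_eq b (mem_univ b)).symm

theorem exists_totalDegree_le_one_eval_eq
    (hS : MomentsVanish ((S : Set (σ → F)).indicator 1) ((q - 1) * Fintype.card τ))
    (ℓ : (σ → F) →ₗ[F] (τ → F)) {ψ : (τ → F) → σ → F}
    (hψ : ∀ b, {x ∈ S | ℓ x = b} = {ψ b}) (i : σ) :
    ∃ Φ : MvPolynomial τ F, Φ.totalDegree ≤ 1 ∧ ∀ b, eval b Φ = ψ b i := by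
  obtain ⟨Φ, hΦ1, hΦ⟩ := ((hS.mul_eval (X i)).pushforward ℓ).exists_totalDegree_le (k := 1)
    (by rw [totalDegree_X]; omega)
  exact ⟨Φ, hΦ1, fun b => by simp [hΦ, sum_filter_indicator_one_mul, hψ b]⟩

theorem exists_affineSubspace_eq
    (hS : MomentsVanish ((S : Set (σ → F)).indicator 1) ((q - 1) * Fintype.card τ))
    (ℓ : (σ → F) →ₗ[F] (τ → F)) {ψ : (τ → F) → σ → F}
    (hψ : ∀ b, {x ∈ S | ℓ x = b} = {ψ b}) :
    ∃ A : AffineSubspace F (σ → F), (S : Set (σ → F)) = A := by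
  choose Φ hΦ1 hΦ using exists_totalDegree_le_one_eval_eq hS ℓ hψ
  have hrange : (S : Set (σ → F)) = Set.range ψ := by
    ext x
    refine ⟨fun hx => ⟨ℓ x, ?_⟩, ?_⟩
    · have hx' : x ∈ {y ∈ S | ℓ y = ℓ x} := mem_filter.mpr ⟨hx, rfl⟩
      rw [hψ] at hx'
      exact (mem_singleton.mp hx').symm
    · rintro ⟨b, rfl⟩
      exact (mem_filter.mp (hψ b ▸ mem_singleton_self (ψ b))).1
  have haffine : ∀ (c : F) a b e, ψ (c • (a - b) + e) = c • (ψ a - ψ b) + ψ e := fun c a b e => by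
    funext i
    simpa [hΦ] using eval_smul_sub_add_of_totalDegree_le_one (hΦ1 i) c a b e
  refine ⟨⟨Set.range ψ, ?_⟩, hrange⟩
  rintro c _ _ _ ⟨a, rfl⟩ ⟨b, rfl⟩ ⟨e, rfl⟩
  exact ⟨c • (a - b) + e, haffine c a b e⟩

end MomentsVanish

theorem theorem2_i_general
    (F : Type*) [Field F] [Fintype F]
    (n r d : ℕ) (f : Fin r → MvPolynomial (Fin n) F)
    (hd : (∑ i, (f i).totalDegree) = d)
    (Z : Set (Fin n → F))
    (hZ : Z = {x | ∀ i, MvPolynomial.eval x (f i) = 0})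
    (hne : Z.Nonempty)
    (hnl : ∀ A : AffineSubspace F (Fin n → F), Z ≠ (A : Set (Fin n → F))) :
    Fintype.card F ^ (n - d) < Z.ncard := by
  classical
  by_contra! hcard
  set S := Z.toFinset
  have hS : MomentsVanish ((S : Set (Fin n → F)).indicator 1)
      ((Fintype.card F - 1) * Fintype.card (Fin (n - d))) := by
    simpa [S, hZ, hd] using momentsVanish_indicator_zeroLocus f
  obtain ⟨z₀, hz₀⟩ := hne
  have hz₀S : z₀ ∈ S := Set.mem_toFinset.mpr hz₀
  have hcardS : #S ≤ Nat.card (Fin (n - d) → F) := by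
    simpa [S, Set.ncard_eq_toFinset_card'] using hcard
  obtain ⟨ℓ, hℓ⟩ := exists_linearMap_apply_eq_apply_imp_eq (F := F) hz₀S hcardS
  choose ψ hψ using fun b =>
    card_eq_one.mp (card_filter_apply_eq_eq_one hS ℓ hcardS hz₀S hℓ b)
  obtain ⟨A, hA⟩ := exists_affineSubspace_eq hS ℓ hψ
  exact hnl A (by simpa [S] using hA)

theorem theorem2_i
    (F : Type*) [Field F] [Fintype F]
    (n r d : ℕ) (f : Fin r → MvPolynomial (Fin n) F)
    (hd : (∑ i, (f i).totalDegree) = d) (hdn : d < n)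
    (Z : Set (Fin n → F))
    (hZ : Z = {x | ∀ i, MvPolynomial.eval x (f i) = 0})
    (hne : Z.Nonempty)
    (hnl : ∀ A : AffineSubspace F (Fin n → F), Z ≠ (A : Set (Fin n → F))) :
    Fintype.card F ^ (n - d) < Z.ncard :=
  theorem2_i_general F n r d f hd Z hZ hne hnl
end
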